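/- arXiv:2210.10254 — 2 statements merged into one kernel-verified Lean document; each statement's English description precedes it below -/
import Mathlib

section
/- Let R^(0), R^(1), ..., R^(K) be exchangeable real-valued random variables on a common probability space (i.e., the joint distribution of (R^(0),...,R^(K)) is invariant under every permutation of the indices {0,...,K}). Let δ̄ ∈ (0,1), set p := ⌈(K+1)(1−δ̄)⌉, and let C be the p-th smallest element of the list (R^(1),...,R^(K),+∞) of extended reals. Then P(R^(0) ≤ C) ≥ p/(K+1) ≥ 1 − δ̄. -/
/-!
The event `R 0 ≤ C` says that fewer than `p` of the scores lie strictly below `R 0`. Among any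
`K + 1` reals, at least `p` of them (for instance the `p` smallest) have fewer than `p` entries
strictly below them, so the `K + 1` events "fewer than `p` scores lie strictly below `R j`" cover
every outcome at least `p` times. By exchangeability they all have the same probability, hence
`(K + 1) P(R 0 ≤ C) ≥ p`.
-/

open MeasureTheory

/-- The `p`-th smallest element (1-indexed) of the list consisting of the `K` extended-real
scores `R 1, ..., R K` together with `+∞`. -/
noncomputable def conformalBound (K : ℕ) (R : Fin K → EReal) (p : ℕ) : EReal :=
  (@List.insertionSort EReal (· ≤ ·) (Classical.decRel _)
    (((List.finRange K).map R) ++ [⊤])).getD (p - 1) ⊤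

open Finset

theorem List.le_getElem_iff_countP_lt_le {α : Type*} [LinearOrder α] {l : List α}
    (hl : l.Pairwise (· ≤ ·)) {j : ℕ} (hj : j < l.length) (x : α) :
    x ≤ l[j] ↔ l.countP (· < x) ≤ j := by
  induction l generalizing j with
  | nil => simp at hj
  | cons a t ih =>
    rw [List.pairwise_cons] at hl
    by_cases hax : a < x
    · cases j with
      | zero => simp [hax, not_le.mpr hax]
      | succ j => simp [hax, ih hl.2]
    · have hxt : ∀ b ∈ t, x ≤ b := fun b hb => (not_lt.1 hax).trans (hl.1 b hb)
      have hx : x ≤ (a :: t)[j] := by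
        cases j with
        | zero => exact not_lt.1 hax
        | succ j => exact hxt _ (List.getElem_mem _)
      have ht : t.countP (· < x) = 0 := List.countP_eq_zero.2 fun b hb => by simpa using hxt b hb
      simp [hx, hax, ht]

theorem le_conformalBound_iff {K p : ℕ} (hp : 1 ≤ p) (r : Fin K → EReal) (x : EReal) :
    x ≤ conformalBound K r p ↔ #{i | r i < x} < p := by
  let L := (List.finRange K).map r ++ [⊤]
  let s := @List.insertionSort EReal (· ≤ ·) (Classical.decRel _) L
  have hperm : s.Perm L := @List.perm_insertionSort EReal (· ≤ ·) (Classical.decRel _) L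
  have hcount : s.countP (· < x) = #{i | r i < x} := by
    rw [hperm.countP_eq, List.countP_append, List.countP_map, List.countP_eq_length_filter]
    simp [not_top_lt, card_def, Fin.univ_def, Function.comp_def]
  have hlen : s.length = K + 1 := by simp [hperm.length_eq, L]
  unfold conformalBound
  by_cases hj : p - 1 < s.length
  · rw [List.getD_eq_getElem _ _ hj, List.le_getElem_iff_countP_lt_le
      (@List.pairwise_insertionSort EReal (· ≤ ·) (Classical.decRel _) _ _ L) hj, hcount]
    omega
  · rw [List.getD_eq_default _ _ (not_lt.1 hj)]
    have := card_le_univ (({i | r i < x} : Finset (Fin K)))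
    simp only [le_top, true_iff, Fintype.card_fin] at this ⊢
    omega

section StrictRank

variable {ι α : Type*} [Fintype ι] [LinearOrder α]

def strictRank (u : ι → α) (j : ι) : ℕ :=
  #{i | u i < u j}

theorem le_card_filter_strictRank_lt (u : ι → α) {p : ℕ} (hp : p ≤ Fintype.card ι) :
    p ≤ #{j | strictRank u j < p} := by
  classical
  set S : Finset ι := {j | strictRank u j < p}
  by_contra! hS
  obtain ⟨j, hjS, hmin⟩ := Sᶜ.exists_min_image u (by rw [← card_pos, card_compl]; omega)
  have hbelow : ({i | u i < u j} : Finset ι) ⊆ S := fun i hi => by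
    by_contra hiS
    exact (hmin i (mem_compl.2 hiS)).not_gt (mem_filter.1 hi).2
  exact mem_compl.1 hjS (mem_filter.2 ⟨mem_univ _, (card_le_card hbelow).trans_lt hS⟩)

theorem strictRank_comp_perm (u : ι → α) (σ : Equiv.Perm ι) (j : ι) :
    strictRank (u ∘ σ) j = strictRank u (σ j) :=
  card_equiv σ (by simp)

theorem strictRank_zero {K : ℕ} (u : Fin (K + 1) → α) :
    strictRank u 0 = #{i : Fin K | u i.succ < u 0} := by
  simp [strictRank, Fin.card_filter_univ_succ]

theorem measurableSet_strictRank_lt (j : ι) (p : ℕ) :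
    MeasurableSet {u : ι → ℝ | strictRank u j < p} := by
  classical
  have : Measurable fun u : ι → ℝ => strictRank u j := by
    simp_rw [strictRank, card_filter]
    exact Finset.measurable_sum _ fun i _ =>
      Measurable.ite (measurableSet_lt (measurable_pi_apply i) (measurable_pi_apply j))
        measurable_const measurable_const
  exact measurableSet_lt this measurable_const

end StrictRank

section Measure

variable {ι Ω : Type*} [Fintype ι] [MeasurableSpace Ω] (μ : Measure Ω)

open scoped Classical in
theorem natCast_mul_measure_univ_le_sum_measure {A : ι → Set Ω}
    (hA : ∀ j, MeasurableSet (A j)) {c : ℕ} (hc : ∀ ω, c ≤ #{j | ω ∈ A j}) :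
    c * μ Set.univ ≤ ∑ j, μ (A j) :=
  calc c * μ Set.univ = ∫⁻ _, (c : ENNReal) ∂μ := (lintegral_const _).symm
    _ ≤ ∫⁻ ω, ∑ j, (A j).indicator 1 ω ∂μ := lintegral_mono fun ω => by
      simpa [Set.indicator_apply, sum_boole] using hc ω
    _ = ∑ j, μ (A j) := by
      rw [lintegral_finsetSum _ fun j _ => measurable_one.indicator (hA j)]
      simp [lintegral_indicator_one (hA _)]

theorem measure_strictRank_lt_eq (R : ι → Ω → ℝ) (hR : ∀ i, Measurable (R i))
    (hexch : ∀ σ : Equiv.Perm ι,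
      μ.map (fun ω i => R (σ i) ω) = μ.map (fun ω i => R i ω)) (p : ℕ) (j k : ι) :
    μ {ω | strictRank (R · ω) j < p} = μ {ω | strictRank (R · ω) k < p} := by
  classical
  let σ := Equiv.swap k j
  have hB := measurableSet_strictRank_lt k p
  have hj : {ω | strictRank (R · ω) j < p} =
      (fun ω i => R (σ i) ω) ⁻¹' {u | strictRank u k < p} := by
    ext ω
    show strictRank (R · ω) j < p ↔ strictRank ((R · ω) ∘ σ) k < p
    rw [strictRank_comp_perm, Equiv.swap_apply_left]
  rw [hj, ← Measure.map_apply (by fun_prop) hB, hexch, Measure.map_apply (by fun_prop) hB]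
  rfl

theorem natCast_mul_measure_univ_le_card_mul_measure_strictRank_lt (R : ι → Ω → ℝ)
    (hR : ∀ i, Measurable (R i))
    (hexch : ∀ σ : Equiv.Perm ι,
      μ.map (fun ω i => R (σ i) ω) = μ.map (fun ω i => R i ω))
    {p : ℕ} (hp : p ≤ Fintype.card ι) (j : ι) :
    p * μ Set.univ ≤ Fintype.card ι * μ {ω | strictRank (R · ω) j < p} := by
  have hmeas : Measurable fun ω i => R i ω := measurable_pi_lambda _ hR
  calc p * μ Set.univ ≤ ∑ k, μ {ω | strictRank (R · ω) k < p} :=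
        natCast_mul_measure_univ_le_sum_measure μ
          (fun k => hmeas (measurableSet_strictRank_lt k p))
          fun ω => by simpa using le_card_filter_strictRank_lt (R · ω) hp
    _ = ∑ _k : ι, μ {ω | strictRank (R · ω) j < p} :=
        sum_congr rfl fun k _ => measure_strictRank_lt_eq μ R hR hexch p k j
    _ = Fintype.card ι * μ {ω | strictRank (R · ω) j < p} := by
        simp [sum_const, nsmul_eq_mul]

end Measure

/-- **Conformal prediction coverage (quantile lemma).**
If `R 0, ..., R K` are exchangeable real random variables, `δ̄ ∈ (0,1)`,
`p = ⌈(K+1)(1-δ̄)⌉`, and `C` is the `p`-th smallest element of the list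
`(R 1, ..., R K, +∞)`, then `P(R 0 ≤ C) ≥ p/(K+1) ≥ 1 - δ̄`. -/
theorem conformal_coverage
    {Ω : Type*} [MeasurableSpace Ω] (μ : Measure Ω) [IsProbabilityMeasure μ]
    (K : ℕ) (R : Fin (K + 1) → Ω → ℝ)
    (hmeas : ∀ i, Measurable (R i))
    (hexch : ∀ σ : Equiv.Perm (Fin (K + 1)),
      Measure.map (fun ω => fun i => R (σ i) ω) μ = Measure.map (fun ω => fun i => R i ω) μ)
    (δ : ℝ) (hδ : δ ∈ Set.Ioo (0 : ℝ) 1)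
    (p : ℕ) (hp : p = ⌈((K : ℝ) + 1) * (1 - δ)⌉₊)
    (C : Ω → EReal)
    (hC : ∀ ω, C ω = conformalBound K (fun i => ((R i.succ ω : ℝ) : EReal)) p) :
    ENNReal.ofReal ((p : ℝ) / ((K : ℝ) + 1)) ≤
        μ {ω | ((R 0 ω : ℝ) : EReal) ≤ C ω} ∧
      1 - δ ≤ (p : ℝ) / ((K : ℝ) + 1) := by
  obtain ⟨hδ0, hδ1⟩ := hδ
  have hK : (0 : ℝ) < K + 1 := by positivity
  have hp1 : 1 ≤ p := hp ▸ Nat.ceil_pos.2 (mul_pos hK (by linarith))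
  have hpK : p ≤ K + 1 := hp ▸ Nat.ceil_le.2 (by push_cast; nlinarith)
  have hevent : {ω | ((R 0 ω : ℝ) : EReal) ≤ C ω} = {ω | strictRank (R · ω) 0 < p} := by
    ext ω
    simp [hC, le_conformalBound_iff hp1, strictRank_zero]
  have hcover := natCast_mul_measure_univ_le_card_mul_measure_strictRank_lt μ R hmeas hexch
    (by simpa using hpK) 0
  simp only [measure_univ, mul_one, Fintype.card_fin, Nat.cast_add, Nat.cast_one] at hcover
  refine ⟨?_, ?_⟩
  · rw [hevent, ENNReal.ofReal_div_of_pos hK]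
    exact_mod_cast ENNReal.div_le_of_le_mul' hcover
  · rw [le_div_iff₀ hK, hp, mul_comm]
    exact Nat.le_ceil _
end

section
/- (Theorem 3, closed-loop control) Let Y^(0), Y^(1), ..., Y^(K) be i.i.d. random trajectories, each a random element of (ℝ^d)^{T+1}, writing Y^(i) = (Y^(i)_0,...,Y^(i)_T). For each t ∈ {0,...,T−1} let h_t : (ℝ^d)^{t+1} → ℝ^d be a measurable predictor and set ŷ^(i)_{t+1|t} := h_t(Y^(i)_0,...,Y^(i)_t). Let δ ∈ (0,1), δ̄ := δ/T, p := ⌈(K+1)(1−δ̄)⌉, and for each t let C_{t+1|t} be the p-th smallest element of the list (‖Y^(1)_{t+1} − ŷ^(1)_{t+1|t}‖, ..., ‖Y^(K)_{t+1} − ŷ^(K)_{t+1|t}‖, +∞). Let c : ℝ^n × ℝ^d → ℝ satisfy |c(x, y') − c(x, y'')| ≤ L‖y' − y''‖ for all x, y', y''. Suppose the closed-loop states are given by measurable feedback maps ξ_t : (ℝ^d)^{t+1} → ℝ^n, with X_{t+1} := ξ_t(Y^(0)_0,...,Y^(0)_t), and that almost surely c(X_{t+1}, ŷ^(0)_{t+1|t})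 ≥ L·C_{t+1|t} for every t ∈ {0,...,T−1} (in particular C_{t+1|t} < ∞). Then P(c(X_{t+1}, Y^(0)_{t+1}) ≥ 0 for all t ∈ {0,...,T−1}) ≥ 1 − δ. -/
open MeasureTheory ProbabilityTheory
open scoped ENNReal

section Aux

open Finset

lemma conformal_lt_imp_count {K : ℕ} (r : Fin K → EReal) (p : ℕ) (hp : 1 ≤ p)
    (v : EReal) (hv : conformalBound K r p < v) :
    p ≤ (Finset.univ.filter fun i => r i < v).card := by
  classical
  rw [conformalBound] at hv
  set l : List EReal := ((List.finRange K).map r) ++ [⊤] with hl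
  set s := @List.insertionSort EReal (· ≤ ·) (Classical.decRel _) l with hs
  have hlen : s.length = K + 1 := by
    rw [hs, List.length_insertionSort, hl]; simp
  have hsort : List.Pairwise (· ≤ ·) s := @List.pairwise_insertionSort EReal _ (Classical.decRel _) _ _ l
  have hperm : s.Perm l := @List.perm_insertionSort EReal _ (Classical.decRel _) l
  have hplt : p - 1 < s.length := by
    by_contra hcon
    have : s.getD (p-1) ⊤ = ⊤ := by
      rw [List.getD_eq_getElem?_getD, List.getElem?_eq_none (by omega)]; rfl
    rw [this] at hv
    exact not_top_lt hv
  have hlt : ∀ i (hi : i < p), s[i]'(by omega) < v := by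
    intro i hi
    have h1 : s.get ⟨i, by omega⟩ ≤ s.get ⟨p-1, hplt⟩ :=
      hsort.rel_get_of_le (by simp [Fin.le_def]; omega)
    have h2 : s.getD (p-1) ⊤ = s.get ⟨p-1, hplt⟩ := by
      rw [List.getD_eq_getElem?_getD, List.getElem?_eq_getElem hplt]; rfl
    rw [h2] at hv
    exact lt_of_le_of_lt h1 hv
  have hcount : p ≤ s.countP (fun x => decide (x < v)) := by
    calc p = (s.take p).length := by rw [List.length_take]; omega
    _ = (s.take p).countP (fun x => decide (x < v)) := by
        rw [eq_comm, List.countP_eq_length]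
        intro a ha
        obtain ⟨i, hi, rfl⟩ := List.mem_take_iff_getElem.1 ha
        simpa using hlt i (by omega)
    _ ≤ s.countP (fun x => decide (x < v)) := by
        conv_rhs => rw [← List.take_append_drop p s]
        rw [List.countP_append]; omega
  have hcl : s.countP (fun x => decide (x < v)) = l.countP (fun x => decide (x < v)) :=
    hperm.countP_eq _
  rw [hcl, hl, List.countP_append, List.countP_map] at hcount
  have htop : (List.countP (fun x => decide (x < v)) (List.cons ⊤ List.nil)) = 0 := by
    simp
  rw [htop] at hcount
  have hfin : ((List.finRange K).countP fun i => decide (r i < v))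
      = (Finset.univ.filter fun i => r i < v).card := by
    simp [Finset.filter, Finset.card, Fin.univ_def, Multiset.filter_coe,
      List.countP_eq_length_filter]
  have hcomp : List.countP ((fun x => decide (x < v)) ∘ r) (List.finRange K)
      = List.countP (fun i => decide (r i < v)) (List.finRange K) := rfl
  omega

lemma conformalBound_nonneg {K : ℕ} (r : Fin K → EReal) (p : ℕ) (hr : ∀ i, 0 ≤ r i) :
    0 ≤ conformalBound K r p := by
  rw [conformalBound]
  set l : List EReal := ((List.finRange K).map r) ++ [⊤] with hl
  set s := @List.insertionSort EReal (· ≤ ·) (Classical.decRel _) l with hs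
  rcases lt_or_ge (p-1) s.length with hlt | hge
  · rw [List.getD_eq_getElem?_getD, List.getElem?_eq_getElem hlt]
    have hmem : s[p-1] ∈ s := List.getElem_mem _
    have hmem' : s[p-1] ∈ l := (@List.perm_insertionSort EReal _ (Classical.decRel _) l).mem_iff.1 hmem
    rw [hl, List.mem_append] at hmem'
    rcases hmem' with hm | hm
    · obtain ⟨i, _, hri⟩ := List.mem_map.1 hm
      show (0:EReal) ≤ s[p-1]
      rw [← hri]; exact hr i
    · simp only [List.mem_singleton] at hm
      show (0:EReal) ≤ s[p-1]
      rw [hm]; exact le_top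
  · rw [List.getD_eq_getElem?_getD, List.getElem?_eq_none hge]
    exact le_top

lemma card_succ_eq_erase {K : ℕ} (q : Fin (K+1) → Prop) [DecidablePred q] :
    (univ.filter fun i : Fin K => q i.succ).card = ((univ.erase 0).filter q).card := by
  refine Finset.card_bij' (fun i _ => i.succ)
    (fun j hj => j.pred (by
      rw [Finset.mem_filter, Finset.mem_erase] at hj; exact hj.1.1)) ?_ ?_ ?_ ?_
  · intro i hi
    rw [Finset.mem_filter] at hi
    rw [Finset.mem_filter, Finset.mem_erase]
    exact ⟨⟨Fin.succ_ne_zero i, Finset.mem_univ _⟩, hi.2⟩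
  · intro j hj
    rw [Finset.mem_filter, Finset.mem_erase] at hj
    rw [Finset.mem_filter]
    refine ⟨Finset.mem_univ _, ?_⟩
    rw [Fin.succ_pred]
    exact hj.2
  · intro i _; exact Fin.pred_succ i
  · intro j hj; exact Fin.succ_pred _ _

lemma rank_pigeonhole {ι : Type*} [Fintype ι] [DecidableEq ι] {β : Type*} [LinearOrder β]
    (r : ι → β) (p : ℕ) :
    (univ.filter fun j => p ≤ ((univ.erase j).filter fun i => r i < r j).card).card
      ≤ Fintype.card ι - p := by
  classical
  set S := univ.filter fun j => p ≤ ((univ.erase j).filter fun i => r i < r j).card with hS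
  rcases S.eq_empty_or_nonempty with he | hne
  · simp [he]
  obtain ⟨j0, hj0S, hmin⟩ := S.exists_min_image r hne
  have hj0 : p ≤ ((univ.erase j0).filter fun i => r i < r j0).card := by
    simpa [hS] using (Finset.mem_filter.1 hj0S).2
  have hsub : ((univ.erase j0).filter fun i => r i < r j0) ⊆ univ \ S := by
    intro i hi
    rw [Finset.mem_filter] at hi
    rw [Finset.mem_sdiff]
    refine ⟨Finset.mem_univ _, fun hiS => ?_⟩
    exact absurd (hmin i hiS) (not_le.2 hi.2)
  have h1 : p ≤ (univ \ S).card := le_trans hj0 (Finset.card_le_card hsub)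
  have h2 : (univ \ S).card = Fintype.card ι - S.card := by
    rw [Finset.card_sdiff_of_subset (Finset.subset_univ S), Finset.card_univ]
  have h3 : S.card ≤ Fintype.card ι :=
    le_trans (Finset.card_le_card (Finset.subset_univ S)) (le_of_eq Finset.card_univ)
  omega

/-- The "rank ≥ p" region for test index `j`. -/
noncomputable def Sset (K p : ℕ) (j : Fin (K+1)) : Set (Fin (K+1) → EReal) :=
  {f | p ≤ ((univ.erase j).filter fun i => f i < f j).card}

lemma measurable_Sset (K p : ℕ) (j : Fin (K+1)) : MeasurableSet (Sset K p j) := by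
  classical
  have hF : Measurable fun f : Fin (K+1) → EReal =>
      ∑ i ∈ univ.erase j, if f i < f j then 1 else (0:ℕ) := by
    refine Finset.measurable_sum _ fun i _ => ?_
    exact Measurable.ite (measurableSet_lt (measurable_pi_apply i) (measurable_pi_apply j))
      measurable_const measurable_const
  have : Sset K p j = (fun f : Fin (K+1) → EReal =>
      ∑ i ∈ univ.erase j, if f i < f j then 1 else (0:ℕ)) ⁻¹' Set.Ici p := by
    ext f
    simp only [Sset, Set.mem_setOf_eq, Set.mem_preimage, Set.mem_Ici, Finset.card_filter]
  rw [this]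
  exact hF measurableSet_Ici

lemma Sset_swap (K p : ℕ) (j : Fin (K+1)) :
    Sset K p j = (fun f : Fin (K+1) → EReal => f ∘ (Equiv.swap 0 j)) ⁻¹' Sset K p 0 := by
  classical
  set σ := Equiv.swap (0 : Fin (K+1)) j with hσ
  have hσ0 : σ 0 = j := Equiv.swap_apply_left _ _
  have hinv : ∀ i, σ (σ i) = i := fun i => Equiv.swap_apply_self _ _ _
  ext f
  simp only [Sset, Set.mem_preimage, Set.mem_setOf_eq, Function.comp]
  have hcard : ((univ.erase 0).filter fun i => f (σ i) < f (σ 0)).card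
      = ((univ.erase j).filter fun i => f i < f j).card := by
    refine Finset.card_bij' (fun i _ => σ i) (fun i _ => σ i) ?_ ?_ ?_ ?_
    · intro a ha
      simp only [Finset.mem_filter, Finset.mem_erase] at ha ⊢
      refine ⟨⟨?_, Finset.mem_univ _⟩, by rw [← hσ0]; exact ha.2⟩
      intro hc
      exact ha.1.1 (σ.injective (by rw [hc, hσ0]))
    · intro a ha
      simp only [Finset.mem_filter, Finset.mem_erase] at ha ⊢
      have hσj : σ j = 0 := Equiv.swap_apply_right _ _
      refine ⟨⟨fun hc => ha.1.1 (σ.injective (by rw [hc, hσj])), Finset.mem_univ _⟩, ?_⟩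
      rw [hinv, hσ0]
      exact ha.2
    · intro a _; exact hinv a
    · intro a _; exact hinv a
  rw [hcard]

lemma coverage {Ω : Type*} [MeasurableSpace Ω] (μ : Measure Ω) [IsProbabilityMeasure μ]
    (K : ℕ) (R : Fin (K+1) → Ω → EReal) (hmeasR : ∀ i, Measurable (R i))
    (hindep : iIndepFun R μ)
    (hident : ∀ i, Measure.map (R i) μ = Measure.map (R 0) μ)
    (p : ℕ) :
    ((K : ℝ≥0∞) + 1) * μ ((fun ω i => R i ω) ⁻¹' Sset K p 0)
      ≤ ((K + 1 - p : ℕ) : ℝ≥0∞) := by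
  classical
  set Rvec : Ω → (Fin (K+1) → EReal) := fun ω i => R i ω with hRvec
  have hmRvec : Measurable Rvec := measurable_pi_lambda _ hmeasR
  set m : Measure EReal := Measure.map (R 0) μ with hm
  have : IsProbabilityMeasure m := Measure.isProbabilityMeasure_map (hmeasR 0).aemeasurable
  set ν : Measure (Fin (K+1) → EReal) := Measure.map Rvec μ with hν
  have : IsProbabilityMeasure ν := Measure.isProbabilityMeasure_map hmRvec.aemeasurable
  have hpi : Measure.pi (fun _ : Fin (K+1) => m) = ν := by
    refine Measure.pi_eq fun s hs => ?_
    rw [hν, Measure.map_apply hmRvec (MeasurableSet.univ_pi hs)]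
    have hpre : Rvec ⁻¹' Set.univ.pi s = ⋂ i ∈ univ, R i ⁻¹' s i := by
      ext ω; simp [Set.mem_univ_pi, hRvec]
    rw [hpre, hindep.measure_inter_preimage_eq_mul univ (fun i _ => hs i)]
    refine Finset.prod_congr rfl fun i _ => ?_
    rw [← Measure.map_apply (hmeasR i) (hs i), hident i]
  have hsame : ∀ j, ν (Sset K p j) = ν (Sset K p 0) := by
    intro j
    set σ := Equiv.swap (0 : Fin (K+1)) j with hσ
    have hg : (fun f : Fin (K+1) → EReal => f ∘ σ)
        = ⇑(MeasurableEquiv.piCongrLeft (fun _ => EReal) σ) := by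
      funext f
      funext i
      have h1 := MeasurableEquiv.piCongrLeft_apply_apply σ (β := fun _ => EReal) f (σ i)
      have h2 : σ (σ i) = i := Equiv.swap_apply_self _ _ _
      rw [h2] at h1
      simp only [Function.comp_apply]
      rw [← h1]
    have hmp : MeasurePreserving (fun f : Fin (K+1) → EReal => f ∘ σ)
        (Measure.pi fun _ => m) (Measure.pi fun _ => m) := by
      rw [hg]
      exact measurePreserving_piCongrLeft (fun _ => m) σ
    rw [Sset_swap K p j, ← hpi]
    exact hmp.measure_preimage (measurable_Sset K p 0).nullMeasurableSet
  have hsum : ∑ j : Fin (K+1), ν (Sset K p j) ≤ ((K + 1 - p : ℕ) : ℝ≥0∞) := by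
    have heq : ∀ j : Fin (K+1), ν (Sset K p j) = ∫⁻ f, (Sset K p j).indicator 1 f ∂ν :=
      fun j => (lintegral_indicator_one (measurable_Sset K p j)).symm
    calc ∑ j : Fin (K+1), ν (Sset K p j)
        = ∫⁻ f, ∑ j : Fin (K+1), (Sset K p j).indicator 1 f ∂ν := by
          rw [lintegral_finset_sum]
          · exact Finset.sum_congr rfl fun j _ => heq j
          · exact fun j _ => (measurable_const.indicator (measurable_Sset K p j))
      _ ≤ ∫⁻ _, ((K + 1 - p : ℕ) : ℝ≥0∞) ∂ν := by
          refine lintegral_mono fun f => ?_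
          have : ∑ j : Fin (K+1), (Sset K p j).indicator (1 : (Fin (K+1) → EReal) → ℝ≥0∞) f
              = ((univ.filter fun j => f ∈ Sset K p j).card : ℝ≥0∞) := by
            rw [← Finset.sum_boole]
            exact Finset.sum_congr rfl fun j _ => by
              simp [Set.indicator_apply]
          rw [this]
          have hcard := rank_pigeonhole (fun i => f i) p
          rw [Fintype.card_fin] at hcard
          have hfe : (univ.filter fun j => f ∈ Sset K p j).card
              = (univ.filter fun j : Fin (K+1) =>
                  p ≤ ((univ.erase j).filter fun i => f i < f j).card).card := by
            apply Finset.card_bij (fun j _ => j) <;> try (intro a b ha hb hab; exact hab)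
            · intro j hj
              simp only [Finset.mem_filter, Finset.mem_univ, true_and, Sset,
                Set.mem_setOf_eq] at hj ⊢
              exact hj
            · intro j hj
              refine ⟨j, ?_, rfl⟩
              simp only [Finset.mem_filter, Finset.mem_univ, true_and, Sset,
                Set.mem_setOf_eq] at hj ⊢
              exact hj
          rw [hfe]
          exact Nat.cast_le.2 hcard
      _ = ((K + 1 - p : ℕ) : ℝ≥0∞) := by
          rw [lintegral_const, measure_univ, mul_one]
  calc ((K : ℝ≥0∞) + 1) * μ (Rvec ⁻¹' Sset K p 0)
      = ∑ _j : Fin (K+1), μ (Rvec ⁻¹' Sset K p 0) := by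
        rw [Finset.sum_const, Finset.card_univ, Fintype.card_fin]
        simp [mul_comm, nsmul_eq_mul]
    _ = ∑ j : Fin (K+1), ν (Sset K p j) := by
        refine Finset.sum_congr rfl fun j _ => ?_
        have hmap : μ (Rvec ⁻¹' Sset K p 0) = ν (Sset K p 0) :=
          (Measure.map_apply hmRvec (measurable_Sset K p 0)).symm
        rw [hmap, hsame j]
    _ ≤ _ := hsum

end Aux
/-- **Theorem 3 (closed-loop control).** The closed-loop state
`X (t+1) = ξ t (Y 0 0, ..., Y 0 t)` reached at time `t+1` is a measurable feedback of the
observations up to time `t`. If, almost surely, the tightened one-step constraints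
`c (X (t+1)) (ŷ_{t+1|t}) ≥ L * C (t+1|t)` hold (with `C (t+1|t) < ∞`) for all
`t ∈ {0,...,T-1}`, where `C (t+1|t)` is the conformal bound built from the validation
trajectories with `p = ⌈(K+1)(1-δ/T)⌉`, then
`P(c (X (t+1)) (Y 0 (t+1)) ≥ 0 for all t ∈ {0,...,T-1}) ≥ 1 - δ`. -/
theorem closed_loop_safety
    {Ω : Type*} [MeasurableSpace Ω] (μ : Measure Ω) [IsProbabilityMeasure μ]
    (d n T K : ℕ) (hT : 1 ≤ T)
    (Y : Fin (K + 1) → Ω → (Fin (T + 1) → EuclideanSpace ℝ (Fin d)))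
    (hmeas : ∀ i, Measurable (Y i))
    (hindep : iIndepFun Y μ)
    (hident : ∀ i, Measure.map (Y i) μ = Measure.map (Y 0) μ)
    (h : (t : ℕ) → (Fin (t + 1) → EuclideanSpace ℝ (Fin d)) → EuclideanSpace ℝ (Fin d))
    (hmeash : ∀ t, Measurable (h t))
    (δ : ℝ) (hδ : δ ∈ Set.Ioo (0 : ℝ) 1)
    (p : ℕ) (hp : p = ⌈((K : ℝ) + 1) * (1 - δ / T)⌉₊)
    (C : ℕ → Ω → EReal)
    (hC : ∀ t, ∀ (htT : t ≤ T - 1) (ω : Ω), C t ω =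
      conformalBound K
        (fun i => ((‖Y i.succ ω ⟨t + 1, by omega⟩ -
          h t (fun s => Y i.succ ω ⟨s.1, by have := s.isLt; omega⟩)‖ : ℝ) : EReal))
        p)
    (L : ℝ) (hL : 0 ≤ L)
    (c : EuclideanSpace ℝ (Fin n) → EuclideanSpace ℝ (Fin d) → ℝ)
    (hc : ∀ (x : EuclideanSpace ℝ (Fin n)) (y' y'' : EuclideanSpace ℝ (Fin d)),
      (|c x y' - c x y''|) ≤ L * ‖y' - y''‖)
    (ξ : (t : ℕ) → (Fin (t + 1) → EuclideanSpace ℝ (Fin d)) → EuclideanSpace ℝ (Fin n))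
    (hmeasξ : ∀ t, Measurable (ξ t))
    (X : ℕ → Ω → EuclideanSpace ℝ (Fin n))
    (hX : ∀ t, ∀ (htT : t ≤ T - 1) (ω : Ω),
      X (t + 1) ω = ξ t (fun s => Y 0 ω ⟨s.1, by have := s.isLt; omega⟩))
    (hfeas : ∀ᵐ ω ∂μ, ∀ t, ∀ htT : t ≤ T - 1,
      C t ω < ⊤ ∧
      (L : EReal) * C t ω ≤
        ((c (X (t + 1) ω)
          (h t (fun s => Y 0 ω ⟨s.1, by have := s.isLt; omega⟩)) : ℝ) : EReal)) :
    ENNReal.ofReal (1 - δ) ≤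
      μ {ω | ∀ t, ∀ htT : t ≤ T - 1,
        0 ≤ c (X (t + 1) ω) (Y 0 ω ⟨t + 1, by omega⟩)} := by
  classical
  obtain ⟨hδ0, hδ1⟩ := hδ
  have hT0 : (0:ℝ) < T := by exact_mod_cast Nat.lt_of_lt_of_le Nat.zero_lt_one hT
  have hδT1 : δ / T < 1 := lt_of_le_of_lt (div_le_self hδ0.le (by exact_mod_cast hT)) hδ1
  have hδT0 : 0 < δ / T := div_pos hδ0 hT0
  have hp1 : 1 ≤ p := by
    rw [hp]
    refine Nat.ceil_pos.2 (mul_pos (by positivity) (by linarith))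
  -- the per-step score functions, indexed by `Fin T`
  set g : (t' : Fin T) → (Fin (T + 1) → EuclideanSpace ℝ (Fin d)) → EReal := fun t' y =>
    ((‖y ⟨t'.1 + 1, by omega⟩ -
      h t'.1 (fun s => y ⟨s.1, by have := s.isLt; have := t'.isLt; omega⟩)‖ : ℝ) : EReal)
    with hg
  have hmeasg : ∀ t', Measurable (g t') := by
    intro t'
    apply measurable_coe_real_ereal.comp
    apply Measurable.norm
    exact (measurable_pi_apply _).sub
      ((hmeash t'.1).comp (measurable_pi_lambda _ fun s => measurable_pi_apply _))
  -- the per-step bad events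
  set bad : Fin T → Set Ω :=
    fun t' => (fun ω (i : Fin (K+1)) => g t' (Y i ω)) ⁻¹' Sset K p 0 with hbad
  have hmbad : ∀ t', MeasurableSet (bad t') := fun t' =>
    (measurable_pi_lambda _ fun i => (hmeasg t').comp (hmeas i)) (measurable_Sset K p 0)
  -- each bad event has measure at most δ/T
  have hmub : ∀ t', μ (bad t') ≤ ENNReal.ofReal (δ / T) := by
    intro t'
    have hcov := coverage μ K (fun i ω => g t' (Y i ω))
      (fun i => (hmeasg t').comp (hmeas i))
      (hindep.comp (fun _ => g t') (fun _ => hmeasg t'))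
      (fun i => by
        show Measure.map (g t' ∘ Y i) μ = Measure.map (g t' ∘ Y 0) μ
        rw [← Measure.map_map (hmeasg t') (hmeas i), hident i,
          Measure.map_map (hmeasg t') (hmeas 0)])
      p
    have hK0 : ((K : ℝ≥0∞) + 1) ≠ 0 := by simp
    have hKtop : ((K : ℝ≥0∞) + 1) ≠ ⊤ := by
      simp [ENNReal.add_ne_top]
    have hle : ((K + 1 - p : ℕ) : ℝ≥0∞) ≤ ((K : ℝ≥0∞) + 1) * ENNReal.ofReal (δ / T) := by
      have hceil : ((K:ℝ)+1) * (1 - δ/T) ≤ p := by rw [hp]; exact Nat.le_ceil _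
      have hr : ((K + 1 - p : ℕ) : ℝ) ≤ ((K:ℝ)+1) * (δ/T) := by
        rcases le_or_gt p (K+1) with hpK | hpK
        · have hcast : ((K + 1 - p : ℕ) : ℝ) = ((K:ℝ)+1) - p := by
            push_cast [Nat.cast_sub hpK]; ring
          rw [hcast]; nlinarith
        · rw [Nat.sub_eq_zero_of_le hpK.le]
          simp only [Nat.cast_zero]
          positivity
      have hK1 : ENNReal.ofReal ((K:ℝ)+1) = (K : ℝ≥0∞) + 1 := by
        rw [show ((K:ℝ)+1) = ((K+1 : ℕ) : ℝ) by push_cast; ring,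
          ENNReal.ofReal_natCast]
        push_cast; ring
      calc ((K + 1 - p : ℕ) : ℝ≥0∞) = ENNReal.ofReal ((K + 1 - p : ℕ) : ℝ) :=
            (ENNReal.ofReal_natCast _).symm
        _ ≤ ENNReal.ofReal (((K:ℝ)+1) * (δ/T)) := ENNReal.ofReal_le_ofReal hr
        _ = ENNReal.ofReal ((K:ℝ)+1) * ENNReal.ofReal (δ/T) :=
            ENNReal.ofReal_mul (by positivity)
        _ = ((K : ℝ≥0∞) + 1) * ENNReal.ofReal (δ/T) := by rw [hK1]
    exact (ENNReal.mul_le_mul_iff_right hK0 hKtop).1 (hcov.trans hle)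
  -- union bound
  set B : Set Ω := ⋃ t' : Fin T, bad t' with hB
  have hmB : MeasurableSet B := MeasurableSet.iUnion fun t' => hmbad t'
  have hμB : μ B ≤ ENNReal.ofReal δ := by
    calc μ B ≤ ∑' t' : Fin T, μ (bad t') := measure_iUnion_le _
      _ = ∑ t' : Fin T, μ (bad t') := tsum_fintype _
      _ ≤ ∑ _t' : Fin T, ENNReal.ofReal (δ / T) := Finset.sum_le_sum fun t' _ => hmub t'
      _ = (T : ℝ≥0∞) * ENNReal.ofReal (δ / T) := by
          rw [Finset.sum_const, Finset.card_univ, Fintype.card_fin, nsmul_eq_mul]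
      _ = ENNReal.ofReal δ := by
          rw [← ENNReal.ofReal_natCast, ← ENNReal.ofReal_mul (Nat.cast_nonneg T)]
          congr 1
          field_simp
  -- the null set where feasibility fails
  set P : Ω → Prop := fun ω => ∀ t, ∀ htT : t ≤ T - 1,
      C t ω < ⊤ ∧
      (L : EReal) * C t ω ≤
        ((c (X (t + 1) ω)
          (h t (fun s => Y 0 ω ⟨s.1, by have := s.isLt; omega⟩)) : ℝ) : EReal) with hP
  have hnull : μ {ω | ¬ P ω} = 0 := by
    rw [hP]
    exact hfeas
  set N : Set Ω := toMeasurable μ {ω | ¬ P ω} with hN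
  have hmN : MeasurableSet N := measurableSet_toMeasurable _ _
  have hμN : μ N = 0 := by rw [hN, measure_toMeasurable]; exact hnull
  -- the good event contains (B ∪ N)ᶜ
  have hincl : (B ∪ N)ᶜ ⊆ {ω | ∀ t, ∀ htT : t ≤ T - 1,
      0 ≤ c (X (t + 1) ω) (Y 0 ω ⟨t + 1, by omega⟩)} := by
    intro ω hω
    rw [Set.mem_compl_iff, Set.mem_union, not_or] at hω
    obtain ⟨hωB, hωN⟩ := hω
    have hPω : P ω := by
      by_contra hcon
      exact hωN (subset_toMeasurable μ _ hcon)
    intro t htT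
    set t' : Fin T := ⟨t, by omega⟩ with ht'
    -- scores at this step
    set f : Fin (K+1) → EReal := fun i => g t' (Y i ω) with hf
    have hωbad : ω ∉ bad t' := fun hmem => hωB (Set.mem_iUnion.2 ⟨t', hmem⟩)
    have hnotrank : ¬ p ≤ ((Finset.univ.erase 0).filter fun i => f i < f 0).card := by
      intro hcon
      exact hωbad hcon
    -- identify C with the conformal bound of the scores
    have hCval : C t ω = conformalBound K (fun i => f (i.succ)) p := by
      rw [hC t htT ω]
    obtain ⟨hCfin, hCfeas⟩ := hPω t htT
    -- the test score is below the conformal bound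
    have hscore : f 0 ≤ C t ω := by
      by_contra hcon
      push_neg at hcon
      rw [hCval] at hcon
      have := conformal_lt_imp_count (fun i => f (i.succ)) p hp1 (f 0) hcon
      rw [card_succ_eq_erase (fun i => f i < f 0)] at this
      exact hnotrank this
    -- C is nonnegative and finite; extract real value
    have hCnn : (0:EReal) ≤ C t ω := by
      rw [hCval]
      exact conformalBound_nonneg _ _ fun i => by
        exact EReal.coe_nonneg.2 (norm_nonneg _)
    have hCne : C t ω ≠ ⊤ := ne_of_lt hCfin
    have hCnb : C t ω ≠ ⊥ := ne_of_gt (lt_of_lt_of_le (by simp) hCnn)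
    set Cr : ℝ := (C t ω).toReal with hCr
    have hCrepr : ((Cr : ℝ) : EReal) = C t ω := EReal.coe_toReal hCne hCnb
    -- real inequalities
    have hnorm : ‖Y 0 ω ⟨t + 1, by omega⟩ -
        h t (fun s => Y 0 ω ⟨s.1, by have := s.isLt; omega⟩)‖ ≤ Cr := by
      rw [← EReal.coe_le_coe_iff]
      rw [hCrepr]
      exact hscore
    have hcon : L * Cr ≤ c (X (t + 1) ω)
        (h t (fun s => Y 0 ω ⟨s.1, by have := s.isLt; omega⟩)) := by
      rw [← EReal.coe_le_coe_iff]
      calc ((L * Cr : ℝ) : EReal) = (L : EReal) * ((Cr : ℝ) : EReal) := EReal.coe_mul L Cr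
        _ = (L : EReal) * C t ω := by rw [hCrepr]
        _ ≤ _ := hCfeas
    have habs := hc (X (t + 1) ω) (Y 0 ω ⟨t + 1, by omega⟩)
      (h t (fun s => Y 0 ω ⟨s.1, by have := s.isLt; omega⟩))
    have h1 := (abs_le.1 habs).1
    have h2 : L * ‖Y 0 ω ⟨t + 1, by omega⟩ -
        h t (fun s => Y 0 ω ⟨s.1, by have := s.isLt; omega⟩)‖ ≤ L * Cr :=
      mul_le_mul_of_nonneg_left hnorm hL
    linarith
  -- conclude
  calc ENNReal.ofReal (1 - δ)
      ≤ 1 - ENNReal.ofReal δ := by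
        refine ENNReal.le_sub_of_add_le_right ENNReal.ofReal_ne_top ?_
        rw [← ENNReal.ofReal_add (by linarith) hδ0.le]
        rw [show (1 - δ) + δ = 1 by ring]
        simp
    _ ≤ 1 - μ (B ∪ N) := by
        refine tsub_le_tsub_left ?_ 1
        calc μ (B ∪ N) ≤ μ B + μ N := measure_union_le _ _
          _ = μ B := by rw [hμN, add_zero]
          _ ≤ ENNReal.ofReal δ := hμB
    _ = μ (B ∪ N)ᶜ := (prob_compl_eq_one_sub (hmB.union hmN)).symm
    _ ≤ _ := measure_mono hincl
end
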